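/- arXiv:0909.4452 — 2 statements merged into one kernel-verified Lean document; each statement's English description precedes it below -/
import Mathlib

section
/- Let A be a totally unimodular m×n integer matrix and b ∈ ℤᵐ. If the system A x ≥ b has a solution x ∈ ℝⁿ, then it has a solution x ∈ ℤⁿ. -/
/-!
Pivoting on an entry `±1` of a totally unimodular matrix gives a totally unimodular matrix with
one column fewer: by the Schur complement, its minors are, up to sign, minors of the original
matrix. Gaussian elimination then shows, by induction on the number of columns, that a system
`A x = b` with a real solution has an integral one.

For the inequalities, take a real solution `x` of `A x ≥ b` whose set of tight constraints is
maximal, and an integral solution `z` of the tight constraints read as equations. If `z` violated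
some constraint, moving from `x` towards `z` until the first violated constraint becomes tight
would give a real solution with strictly more tight constraints.
-/

/-- A matrix is totally unimodular if every square submatrix
(obtained by selecting rows and columns injectively) has determinant
`1`, `0` or `-1`. -/
def IsTotUnimod {X Y : Type*} (A : Matrix X Y ℤ) : Prop :=
  ∀ (k : ℕ) (f : Fin k → X) (g : Fin k → Y),
    Function.Injective f → Function.Injective g →
      (A.submatrix f g).det = 1 ∨ (A.submatrix f g).det = 0 ∨
        (A.submatrix f g).det = -1

theorem IsTotUnimod.isTotallyUnimodular {X Y : Type*} {A : Matrix X Y ℤ} (hA : IsTotUnimod A) :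
    A.IsTotallyUnimodular := by
  intro k f g hf hg
  rcases hA k f g hf hg with h | h | h
  exacts [⟨1, h.symm⟩, ⟨0, h.symm⟩, ⟨-1, by simpa using h.symm⟩]

/-- Walking from `u` towards `v`, stop at the first constraint that `v` violates. -/
theorem exists_step_to_new_tight {X K : Type*} [Fintype X] [Field K] [LinearOrder K]
    [IsStrictOrderedRing K] {b u v : X → K} (hu : ∀ k, b k ≤ u k)
    (hv : ∀ k, u k = b k → v k = b k) {i : X} (hi : v i < b i) :
    ∃ t : K, (∀ k, b k ≤ u k + t * (v k - u k)) ∧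
      ∃ k₀, b k₀ < u k₀ ∧ u k₀ + t * (v k₀ - u k₀) = b k₀ := by
  classical
  have hslack {k : X} (hk : v k < b k) : b k < u k :=
    (hu k).lt_of_ne fun h => hk.ne (hv k h.symm)
  let τ k := (u k - b k) / (u k - v k)
  obtain ⟨k₀, hk₀, hmin⟩ := Finset.exists_min_image {k | v k < b k} τ ⟨i, by simpa using hi⟩
  simp only [Finset.mem_filter, Finset.mem_univ, true_and] at hk₀ hmin
  have hden : 0 < u k₀ - v k₀ := by linarith [hslack hk₀]
  refine ⟨τ k₀, fun k => ?_, k₀, hslack hk₀, ?_⟩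
  · by_cases hk : v k < b k
    · have := (le_div_iff₀ (by linarith [hslack hk])).mp (hmin k hk)
      linarith
    · have ht₀ : 0 ≤ τ k₀ := div_nonneg (by linarith [hslack hk₀]) hden.le
      have ht₁ : τ k₀ ≤ 1 := (div_le_one hden).mpr (by linarith)
      nlinarith [mul_nonneg (sub_nonneg.2 ht₁) (sub_nonneg.2 (hu k)),
        mul_nonneg ht₀ (sub_nonneg.2 (not_lt.1 hk))]
  · simp only [τ]
    field_simp
    ring

namespace Matrix

variable {X ι R : Type*} [CommRing R] {n : ℕ}

/-- Elimination of column `j` with pivot row `i`; the pivot `A i j` is meant to be `±1`, so it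
stands for its own inverse. -/
def pivot (A : Matrix X (Fin (n + 1)) R) (i : X) (j : Fin (n + 1)) : Matrix X (Fin n) R :=
  of fun k c => A k (j.succAbove c) - A k j * A i j * A i (j.succAbove c)

theorem pivot_map {S : Type*} [CommRing S] (f : R →+* S) (A : Matrix X (Fin (n + 1)) R)
    (i : X) (j : Fin (n + 1)) : (A.pivot i j).map f = (A.map f).pivot i j := by
  ext
  simp [pivot]

theorem mulVec_insertNth_apply (A : Matrix X (Fin (n + 1)) R) (j : Fin (n + 1)) (t : R)
    (y : Fin n → R) (k : X) :
    (A *ᵥ j.insertNth t y) k = A k j * t + ∑ c, A k (j.succAbove c) * y c := by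
  simp [mulVec, dotProduct, Fin.sum_univ_succAbove _ j]

theorem pivot_mulVec_apply (A : Matrix X (Fin (n + 1)) R) {i : X} {j : Fin (n + 1)}
    (hij : A i j * A i j = 1) (t : R) (y : Fin n → R) (k : X) :
    (A.pivot i j *ᵥ y) k =
      (A *ᵥ j.insertNth t y) k - A k j * A i j * (A *ᵥ j.insertNth t y) i := by
  rw [mulVec_insertNth_apply, mulVec_insertNth_apply]
  simp only [pivot, mulVec, dotProduct, of_apply, sub_mul, Finset.sum_sub_distrib, mul_assoc,
    ← Finset.mul_sum]
  linear_combination (A k j * t) * hij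

theorem det_submatrix_sumElim_eq_mul_det_pivot [Fintype ι] [DecidableEq ι]
    (A : Matrix X (Fin (n + 1)) R) {i : X} {j : Fin (n + 1)} (hij : A i j * A i j = 1)
    (f : ι → X) (g : ι → Fin n) :
    (A.submatrix (Sum.elim (fun _ : Unit => i) f) (Sum.elim (fun _ => j) (j.succAbove ∘ g))).det
      = A i j * ((A.pivot i j).submatrix f g).det := by
  set P := A.submatrix (Sum.elim (fun _ : Unit => i) f) (Sum.elim (fun _ => j) (j.succAbove ∘ g))
  have hP : P.toBlocks₁₁ * P.toBlocks₁₁ = 1 := by ext; simp [P, toBlocks₁₁, mul_apply, hij]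
  let _ : Invertible P.toBlocks₁₁ := ⟨P.toBlocks₁₁, hP, hP⟩
  rw [← fromBlocks_toBlocks P, det_fromBlocks₁₁]
  congr 1
  · simp [P, toBlocks₁₁]
  · congr 1
    ext p q
    rw [show ⅟P.toBlocks₁₁ = P.toBlocks₁₁ from rfl]
    simp [P, toBlocks₁₁, toBlocks₁₂, toBlocks₂₁, toBlocks₂₂, pivot, mul_apply]

theorem IsTotallyUnimodular.pivot {A : Matrix X (Fin (n + 1)) R} (hA : A.IsTotallyUnimodular)
    {i : X} {j : Fin (n + 1)} (hij : A i j * A i j = 1) : (A.pivot i j).IsTotallyUnimodular := by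
  rw [isTotallyUnimodular_iff_fintype.{_, _, _, 0}] at hA ⊢
  intro ι _ _ f g
  obtain ⟨s, hs⟩ := hA (Unit ⊕ ι) (Sum.elim (fun _ => i) f) (Sum.elim (fun _ => j) (j.succAbove ∘ g))
  obtain ⟨t, ht⟩ := hA Unit (fun _ => i) (fun _ => j)
  rw [det_submatrix_sumElim_eq_mul_det_pivot A hij] at hs
  simp only [det_unique, submatrix_apply] at ht
  refine ⟨t * s, ?_⟩
  rw [SignType.coe_mul, ht, hs, ← mul_assoc, hij, one_mul]

theorem IsTotallyUnimodular.exists_int_mulVec_eq {K : Type*} [Field K] [CharZero K]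
    {A : Matrix X (Fin n) ℤ} {b : X → ℤ} (hA : A.IsTotallyUnimodular)
    (hsol : ∃ x : Fin n → K, A.map (Int.cast : ℤ → K) *ᵥ x = fun k => (b k : K)) :
    ∃ z : Fin n → ℤ, A *ᵥ z = b := by
  have of_zero {n : ℕ} {b : X → ℤ} (x : Fin n → K)
      (hx : (0 : Matrix X (Fin n) ℤ).map (Int.cast : ℤ → K) *ᵥ x = fun k => (b k : K)) :
      (0 : Matrix X (Fin n) ℤ) *ᵥ 0 = b := by
    ext k
    simpa [eq_comm] using congrFun hx k
  obtain ⟨x, hx⟩ := hsol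
  induction n generalizing b with
  | zero =>
    obtain rfl : A = 0 := Subsingleton.elim _ _
    exact ⟨0, of_zero x hx⟩
  | succ n ih =>
    by_cases hA0 : A = 0
    · subst hA0
      exact ⟨0, of_zero x hx⟩
    obtain ⟨i, j, hij⟩ : ∃ i j, A i j ≠ 0 := by
      by_contra! h
      exact hA0 (ext h)
    have hpiv : A i j * A i j = 1 := by
      obtain ⟨s, hs⟩ := hA.apply i j
      rw [← hs] at hij ⊢
      cases s <;> simp at hij ⊢
    have hmap : (A.pivot i j).map (Int.cast : ℤ → K) = (A.map Int.cast).pivot i j :=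
      pivot_map (Int.castRingHom K) A i j
    obtain ⟨y, hy⟩ := ih (b := fun k => b k - A k j * A i j * b i) (hA.pivot hpiv)
      (j.removeNth x) <| funext fun k => by
        rw [hmap, pivot_mulVec_apply _ (by simp only [map_apply]; exact_mod_cast hpiv) (x j),
          Fin.insertNth_self_removeNth, hx]
        push_cast
        rfl
    set t := A i j * (b i - ∑ c, A i (j.succAbove c) * y c)
    have hi : (A *ᵥ j.insertNth t y) i = b i := by
      rw [mulVec_insertNth_apply]
      linear_combination (b i - ∑ c, A i (j.succAbove c) * y c) * hpiv
    refine ⟨j.insertNth t y, funext fun k => ?_⟩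
    have := congrFun hy k
    rw [pivot_mulVec_apply A hpiv t, hi] at this
    linear_combination this

theorem IsTotallyUnimodular.exists_int_le_mulVec [Fintype X] {K : Type*} [Field K]
    [LinearOrder K] [IsStrictOrderedRing K] {A : Matrix X (Fin n) ℤ} {b : X → ℤ}
    (hA : A.IsTotallyUnimodular)
    (hfeas : ∃ x : Fin n → K, ∀ k, (b k : K) ≤ (A.map (Int.cast : ℤ → K) *ᵥ x) k) :
    ∃ z : Fin n → ℤ, ∀ k, b k ≤ (A *ᵥ z) k := by
  classical
  set A' := A.map (Int.cast : ℤ → K)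
  let tight (x : Fin n → K) : Finset X := {k | (A' *ᵥ x) k = b k}
  obtain ⟨x₀, hx₀⟩ := hfeas
  obtain ⟨_, ⟨x, hx, rfl⟩, hmax⟩ := wellFounded_gt.has_min
    {T | ∃ x : Fin n → K, (∀ k, (b k : K) ≤ (A' *ᵥ x) k) ∧ tight x = T} ⟨_, x₀, hx₀, rfl⟩
  obtain ⟨z, hz⟩ := (hA.submatrix Subtype.val id).exists_int_mulVec_eq (K := K)
    (b := fun k : tight x => b k) ⟨x, funext fun k => (Finset.mem_filter.mp k.2).2⟩
  set z' : Fin n → K := fun c => z c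
  have hz' (k : X) : (A' *ᵥ z') k = (A *ᵥ z) k := ((Int.castRingHom K).map_mulVec A z k).symm
  have hz_tight (k : X) (hk : (A' *ᵥ x) k = b k) : (A' *ᵥ z') k = b k := by
    rw [hz']
    exact_mod_cast congrFun hz ⟨k, by simpa [tight] using hk⟩
  refine ⟨z, fun i => ?_⟩
  by_contra! hi
  obtain ⟨t, hw, k₀, hk₀, hk₀w⟩ := exists_step_to_new_tight (u := A' *ᵥ x) (v := A' *ᵥ z') hx
    hz_tight (i := i) (by rw [hz']; exact_mod_cast hi)
  have hmulVec : A' *ᵥ (x + t • (z' - x)) = A' *ᵥ x + t • (A' *ᵥ z' - A' *ᵥ x) := by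
    simp only [mulVec_add, mulVec_smul, mulVec_sub]
  have hmem (k : X) : k ∈ tight (x + t • (z' - x)) ↔
      (A' *ᵥ x) k + t * ((A' *ᵥ z') k - (A' *ᵥ x) k) = b k := by
    simp [tight, hmulVec]
  refine hmax (tight (x + t • (z' - x))) ⟨_, fun k => ?_, rfl⟩ ?_
  · simpa [hmulVec] using hw k
  refine (Finset.ssubset_iff_of_subset fun k hk => ?_).mpr ⟨k₀, (hmem k₀).mpr hk₀w, ?_⟩
  · simp only [tight, Finset.mem_filter, Finset.mem_univ, true_and] at hk
    rw [hmem, hz_tight k hk, hk]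
    ring
  · simpa [tight] using hk₀.ne'

end Matrix

/-- Integrality of totally unimodular systems: if `A` is totally
unimodular, `b` integral, and `A x ≥ b` has a real solution, then it
has an integer solution. -/
theorem stmt6 {m n : ℕ} (A : Matrix (Fin m) (Fin n) ℤ) (b : Fin m → ℤ)
    (hA : IsTotUnimod A)
    (hfeas : ∃ x : Fin n → ℝ,
      ∀ i, (b i : ℝ) ≤ (A.map (Int.cast : ℤ → ℝ)).mulVec x i) :
    ∃ x : Fin n → ℤ, ∀ i, b i ≤ A.mulVec x i :=
  hA.isTotallyUnimodular.exists_int_le_mulVec hfeas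
end

section
/- Consider the shortest-path pruning rule for SlidingSum: in the dual flow graph, let s(i,i+1) denote the length of a shortest directed path from node i to node i+1 (edge from i to i+1 has cost -a_i, edge from i+1 to i has cost b_i, and for each window p there are edges s_p → s_p+k_p of cost -l_p and s_p+k_p → s_p of cost u_p). Assume the graph has no negative cycles. Then in any solution x of the SlidingSum constraint with a_j ≤ x_j ≤ b_j, for each i: x_i ≥ -s(i,i+1) and x_i ≤ s(i+1,i). -/
/-- `Reaches step v w c`: there is a directed path from `v` to `w` of
total cost `c`, where `step v w c` means there is an edge from `v` to
`w` of cost `c`. -/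
inductive Reaches (step : ℕ → ℕ → ℤ → Prop) : ℕ → ℕ → ℤ → Prop
  | refl (v : ℕ) : Reaches step v v 0
  | tail {u v w : ℕ} {c d : ℤ} :
      Reaches step u v c → step v w d → Reaches step u w (c + d)

/-- The dual flow graph of the SlidingSum constraint on nodes
`0, 1, …, n` (node `j` standing for the partial sum `S j`):
for each variable `x i` an edge `i → i+1` of cost `-a i` and an edge
`i+1 → i` of cost `b i`; for each window `p` an edge `s p → s p + k p`
of cost `-l p` and an edge `s p + k p → s p` of cost `u p`. -/
def dualStep (n m : ℕ) (a b : ℕ → ℤ) (s k : Fin m → ℕ) (l u : Fin m → ℤ)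
    (v w : ℕ) (c : ℤ) : Prop :=
  (∃ i, i < n ∧ v = i ∧ w = i + 1 ∧ c = -(a i)) ∨
  (∃ i, i < n ∧ v = i + 1 ∧ w = i ∧ c = b i) ∨
  (∃ p : Fin m, v = s p ∧ w = s p + k p ∧ c = -(l p)) ∨
  (∃ p : Fin m, v = s p + k p ∧ w = s p ∧ c = u p)

/-- Shortest-path pruning for SlidingSum: if the dual graph has no
negative cycle and `sp i`, `spRev i` are the shortest-path lengths from
`i` to `i+1` and from `i+1` to `i` respectively, then every solution
`x` of the SlidingSum constraint satisfies
`-(sp i) ≤ x i ≤ spRev i`. -/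
theorem stmt13 (n m : ℕ) (a b : ℕ → ℤ) (s k : Fin m → ℕ) (l u : Fin m → ℤ)
    (hk : ∀ p, 1 ≤ k p) (hwin : ∀ p, s p + k p ≤ n)
    (hnoneg : ∀ (v : ℕ) (c : ℤ),
      Reaches (dualStep n m a b s k l u) v v c → 0 ≤ c)
    (sp spRev : ℕ → ℤ)
    (hsp : ∀ i < n, Reaches (dualStep n m a b s k l u) i (i + 1) (sp i) ∧
      ∀ c, Reaches (dualStep n m a b s k l u) i (i + 1) c → sp i ≤ c)
    (hspRev : ∀ i < n,
      Reaches (dualStep n m a b s k l u) (i + 1) i (spRev i) ∧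
      ∀ c, Reaches (dualStep n m a b s k l u) (i + 1) i c → spRev i ≤ c)
    (x : ℕ → ℤ)
    (hbounds : ∀ i < n, a i ≤ x i ∧ x i ≤ b i)
    (hwindows : ∀ p : Fin m,
      l p ≤ ∑ j ∈ Finset.Ico (s p) (s p + k p), x j ∧
        ∑ j ∈ Finset.Ico (s p) (s p + k p), x j ≤ u p) :
    ∀ i < n, -(sp i) ≤ x i ∧ x i ≤ spRev i := by
  intro i hi
  set S : ℕ → ℤ := fun j => ∑ j' ∈ Finset.range j, x j' with hS
  have hedge : ∀ v w c, dualStep n m a b s k l u v w c → S v - S w ≤ c := by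
    intro v w c h
    simp only [dualStep] at h
    obtain ⟨j, hj, hv, hw, hc⟩ | ⟨j, hj, hv, hw, hc⟩ |
      ⟨p, hv, hw, hc⟩ | ⟨p, hv, hw, hc⟩ := h <;> rw [hv, hw, hc]
    · have : S (j + 1) = S j + x j := Finset.sum_range_succ x j
      have := (hbounds j hj).1
      omega
    · have : S (j + 1) = S j + x j := Finset.sum_range_succ x j
      have := (hbounds j hj).2
      omega
    · have hsum : ∑ j ∈ Finset.Ico (s p) (s p + k p), x j = S (s p + k p) - S (s p) := by
        rw [hS, Finset.sum_Ico_eq_sub x (Nat.le_add_right _ _)]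
      have := (hwindows p).1
      omega
    · have hsum : ∑ j ∈ Finset.Ico (s p) (s p + k p), x j = S (s p + k p) - S (s p) := by
        rw [hS, Finset.sum_Ico_eq_sub x (Nat.le_add_right _ _)]
      have := (hwindows p).2
      omega
  have hpath : ∀ v w c, Reaches (dualStep n m a b s k l u) v w c → S v - S w ≤ c := by
    intro v w c h
    induction h with
    | refl => simp
    | tail h1 h2 ih =>
      have := hedge _ _ _ h2
      omega
  have h1 := hpath i (i + 1) (sp i) (hsp i hi).1
  have h2 := hpath (i + 1) i (spRev i) (hspRev i hi).1
  have hx : S (i + 1) = S i + x i := Finset.sum_range_succ x i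
  omega
end
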